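/- arXiv:2003.02153 — 2 statements merged into one kernel-verified Lean document; each statement's English description precedes it below -/
import Mathlib

section
/- Let R be a commutative ring, M a finitely generated R-module, and suppose there is a short exact sequence 0 → N → M → R^r → 0 of R-modules. Then the r-th Fitting ideal of M equals the 0-th Fitting ideal of N: Fitt_R^r(M) = Fitt_R^0(N). -/
/-!
Fitting's lemma: the ideal of `(#generators - i)`-minors of a relation matrix depends only on the
module. Given two presentations `π₁, π₂` of `M` on generators `α₁, α₂`, the relations among the
combined generators `α₁ ⊕ α₂` form the column span of `fromBlocks A₁ Ψ 0 1`, and also, after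
swapping the summands, of `fromBlocks A₂ Φ 0 1`. Minors ideals only depend on the column span and
are unchanged by invertible row operations, which turn `fromBlocks A Ψ 0 1` into the block
diagonal `fromBlocks A 0 0 1`, whose `(k + #γ)`-minors generate the same ideal as the `k`-minors
of `A` (Laplace expansion along the added rows).

Since `R^r` is free, `0 → N → M → R^r → 0` splits, so `M` is presented on the generators of `N`
together with `r` free generators by the matrix `B` with `r` zero rows appended; comparing this
presentation with `A` gives `Fitt^r(M) = I_{n'}(B) = Fitt^0(N)`.
-/

/-- The `i`-th Fitting ideal of a module presented by the matrix `A` (with `n`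
generators and `m` relations): the ideal generated by the `(n-i)×(n-i)` minors
of `A`. -/
def fittingIdeal {R : Type} [CommRing R] {n m : ℕ} (A : Matrix (Fin n) (Fin m) R)
    (i : ℕ) : Ideal R :=
  Ideal.span {x : R | ∃ (r : Fin (n - i) → Fin n) (c : Fin (n - i) → Fin m),
    Function.Injective r ∧ Function.Injective c ∧ x = (A.submatrix r c).det}

open Matrix Function

universe u

section Minors

variable {R : Type*} [CommRing R] {α β γ : Type*}

namespace Sum

theorem exists_eq_inl_comp {ι : Type*} {f : ι → α ⊕ β} (h : ∀ i, (f i).isLeft) :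
    ∃ g : ι → α, f = Sum.inl ∘ g :=
  ⟨fun i => (f i).getLeft (h i), funext fun i => (Sum.inl_getLeft (f i) (h i)).symm⟩

theorem isLeft_of_injective_of_isRight {ι : Type*} [Subsingleton β] {f : ι → α ⊕ β}
    (hf : Injective f) {i₀ i : ι} (hi₀ : (f i₀).isRight) (hi : i ≠ i₀) : (f i).isLeft := by
  obtain ⟨b₀, hb₀⟩ := Sum.isRight_iff.1 hi₀
  rcases hfi : f i with a | b
  · rfl
  · exact absurd (hf (hfi.trans (hb₀ ▸ congrArg Sum.inr (Subsingleton.elim b b₀)))) hi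

end Sum

namespace Matrix

def minorsIdeal (A : Matrix α β R) (k : ℕ) : Ideal R :=
  Ideal.span {x : R | ∃ (r : Fin k → α) (c : Fin k → β),
    Function.Injective r ∧ Function.Injective c ∧ x = (A.submatrix r c).det}

theorem minorsIdeal_le_iff {A : Matrix α β R} {k : ℕ} {I : Ideal R} :
    A.minorsIdeal k ≤ I ↔ ∀ (r : Fin k → α) (c : Fin k → β), Injective r → Injective c →
      (A.submatrix r c).det ∈ I := by
  simp only [minorsIdeal, Ideal.span_le, Set.subset_def, Set.mem_ofPred_eq, SetLike.mem_coe]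
  constructor
  · exact fun h r c hr hc => h _ ⟨r, c, hr, hc, rfl⟩
  · rintro h _ ⟨r, c, hr, hc, rfl⟩
    exact h r c hr hc

theorem det_submatrix_mem_minorsIdeal {ι : Type*} [Fintype ι] [DecidableEq ι] (A : Matrix α β R)
    {r : ι → α} {c : ι → β} (hr : Injective r) (hc : Injective c) :
    (A.submatrix r c).det ∈ A.minorsIdeal (Fintype.card ι) := by
  set e := (Fintype.equivFin ι).symm
  rw [← det_submatrix_equiv_self e, submatrix_submatrix]
  exact Ideal.subset_span ⟨_, _, hr.comp e.injective, hc.comp e.injective, rfl⟩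

theorem minorsIdeal_submatrix_le {α' β' : Type*} (A : Matrix α β R) {f : α' → α} {g : β' → β}
    (hf : Injective f) (hg : Injective g) (k : ℕ) :
    (A.submatrix f g).minorsIdeal k ≤ A.minorsIdeal k :=
  minorsIdeal_le_iff.2 fun r c hr hc => by
    simpa using det_submatrix_mem_minorsIdeal A (hf.comp hr) (hg.comp hc)

theorem minorsIdeal_submatrix_equiv {α' β' : Type*} (A : Matrix α β R) (e₁ : α' ≃ α)
    (e₂ : β' ≃ β) (k : ℕ) : (A.submatrix e₁ e₂).minorsIdeal k = A.minorsIdeal k := by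
  refine le_antisymm (minorsIdeal_submatrix_le A e₁.injective e₂.injective k) ?_
  simpa using minorsIdeal_submatrix_le (A.submatrix e₁ e₂) e₁.symm.injective e₂.symm.injective k

theorem minorsIdeal_transpose_le (A : Matrix α β R) (k : ℕ) :
    Aᵀ.minorsIdeal k ≤ A.minorsIdeal k :=
  minorsIdeal_le_iff.2 fun r c hr hc => by
    rw [← transpose_submatrix, det_transpose]
    simpa using det_submatrix_mem_minorsIdeal A hc hr

theorem minorsIdeal_transpose (A : Matrix α β R) (k : ℕ) :
    Aᵀ.minorsIdeal k = A.minorsIdeal k :=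
  le_antisymm (minorsIdeal_transpose_le A k) (by simpa using minorsIdeal_transpose_le Aᵀ k)

theorem minorsIdeal_succ_le (A : Matrix α β R) (k : ℕ) :
    A.minorsIdeal (k + 1) ≤ A.minorsIdeal k :=
  minorsIdeal_le_iff.2 fun r c hr hc => by
    rw [det_succ_row_zero]
    refine Ideal.sum_mem _ fun j _ => Ideal.mul_mem_left _ _ ?_
    simpa using det_submatrix_mem_minorsIdeal A (hr.comp (Fin.succ_injective _))
      (hc.comp Fin.succAbove_right_injective)

theorem det_mul_eq_sum_det_submatrix {k : ℕ} [Fintype β] (P : Matrix (Fin k) β R)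
    (Q : Matrix β (Fin k) R) :
    (P * Q).det = ∑ g : Fin k → β, (∏ j, Q (g j) j) * (P.submatrix id g).det := by
  have hrows : (P * Q)ᵀ = fun j => ∑ t, Q t j • Pᵀ t := by
    ext j i
    simp [mul_apply, Finset.sum_apply, mul_comm]
  rw [← det_transpose, hrows]
  change detRowAlternating.toMultilinearMap _ = _
  rw [MultilinearMap.map_sum]
  refine Finset.sum_congr rfl fun g _ => ?_
  rw [MultilinearMap.map_smul_univ, smul_eq_mul]
  congr 1
  exact det_transpose (P.submatrix id g)

theorem minorsIdeal_mul_right_le [Fintype β] (A : Matrix α β R) (W : Matrix β γ R) (k : ℕ) :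
    (A * W).minorsIdeal k ≤ A.minorsIdeal k := by
  refine minorsIdeal_le_iff.2 fun r c hr _ => ?_
  rw [submatrix_mul A W r id c bijective_id, det_mul_eq_sum_det_submatrix]
  refine Ideal.sum_mem _ fun g _ => Ideal.mul_mem_left _ _ ?_
  by_cases hg : Injective g
  · simpa using det_submatrix_mem_minorsIdeal A hr hg
  · obtain ⟨i, j, hgij, hij⟩ := not_injective_iff.1 hg
    rw [det_zero_of_column_eq hij fun t => by simp [hgij]]
    exact zero_mem _

theorem minorsIdeal_mul_left_le [Fintype α] (P : Matrix γ α R) (A : Matrix α β R) (k : ℕ) :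
    (P * A).minorsIdeal k ≤ A.minorsIdeal k := by
  rw [← minorsIdeal_transpose, transpose_mul, ← minorsIdeal_transpose A]
  exact minorsIdeal_mul_right_le _ _ k

theorem minorsIdeal_mul_of_isUnit [Fintype α] [DecidableEq α] {P : Matrix α α R} (hP : IsUnit P)
    (A : Matrix α β R) (k : ℕ) : (P * A).minorsIdeal k = A.minorsIdeal k := by
  obtain ⟨P, rfl⟩ := hP
  refine le_antisymm (minorsIdeal_mul_left_le _ A k) ?_
  have hA : A = (↑P⁻¹ : Matrix α α R) * ((P : Matrix α α R) * A) := by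
    rw [← Matrix.mul_assoc, Units.inv_mul, Matrix.one_mul]
  conv_lhs => rw [hA]
  exact minorsIdeal_mul_left_le _ _ k

theorem minorsIdeal_le_of_range_le [Fintype β] [Fintype γ] [DecidableEq γ] {A : Matrix α β R}
    {B : Matrix α γ R} (h : LinearMap.range B.mulVecLin ≤ LinearMap.range A.mulVecLin) (k : ℕ) :
    B.minorsIdeal k ≤ A.minorsIdeal k := by
  choose w hw using fun j => h ⟨Pi.single j 1, rfl⟩
  have hB : B = A * (of w)ᵀ := by
    refine ext_of_mulVec_single fun j => ?_
    rw [← mulVec_mulVec]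
    simpa [mulVec_single_one] using (hw j).symm
  exact hB ▸ minorsIdeal_mul_right_le A _ k

theorem minorsIdeal_eq_of_range_eq [Fintype β] [DecidableEq β] [Fintype γ] [DecidableEq γ]
    {A : Matrix α β R} {B : Matrix α γ R}
    (h : LinearMap.range A.mulVecLin = LinearMap.range B.mulVecLin) (k : ℕ) :
    A.minorsIdeal k = B.minorsIdeal k :=
  le_antisymm (minorsIdeal_le_of_range_le h.le k) (minorsIdeal_le_of_range_le h.ge k)

theorem minorsIdeal_le_fromBlocks_zero_one [Fintype γ] [DecidableEq γ] (A : Matrix α β R)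
    (k : ℕ) :
    A.minorsIdeal k ≤ (fromBlocks A 0 0 (1 : Matrix γ γ R)).minorsIdeal (k + Fintype.card γ) :=
  minorsIdeal_le_iff.2 fun ρ τ hρ hτ => by
    have hblock : (fromBlocks A 0 0 (1 : Matrix γ γ R)).submatrix (Sum.map ρ id) (Sum.map τ id)
        = fromBlocks (A.submatrix ρ τ) 0 0 1 := by
      ext (i | i) (j | j) <;> simp [one_apply]
    simpa [hblock, det_fromBlocks_zero₂₁] using
      det_submatrix_mem_minorsIdeal (fromBlocks A 0 0 (1 : Matrix γ γ R))
        (Sum.map_injective.2 ⟨hρ, injective_id⟩) (Sum.map_injective.2 ⟨hτ, injective_id⟩)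

theorem minorsIdeal_fromBlocks_zero_one_le_of_unique [Unique γ] (A : Matrix α β R) (k : ℕ) :
    (fromBlocks A 0 0 (1 : Matrix γ γ R)).minorsIdeal (k + 1) ≤ A.minorsIdeal k := by
  have hinl {m : ℕ} (ρ : Fin m → α) (τ : Fin m → β) :
      (fromBlocks A 0 0 (1 : Matrix γ γ R)).submatrix (Sum.inl ∘ ρ) (Sum.inl ∘ τ)
        = A.submatrix ρ τ := rfl
  refine minorsIdeal_le_iff.2 fun r c hr hc => ?_
  by_cases hrow : ∃ i₀, (r i₀).isRight
  · -- Laplace expansion along the row of the new generator, which is a unit vector.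
    obtain ⟨i₀, hi₀⟩ := hrow
    rw [det_succ_row _ i₀]
    refine Ideal.sum_mem _ fun j _ => ?_
    by_cases hj : (c j).isRight
    · obtain ⟨ρ, hρ⟩ := Sum.exists_eq_inl_comp (f := r ∘ i₀.succAbove) fun i =>
        Sum.isLeft_of_injective_of_isRight hr hi₀ (Fin.succAbove_ne i₀ i)
      obtain ⟨τ, hτ⟩ := Sum.exists_eq_inl_comp (f := c ∘ j.succAbove) fun i =>
        Sum.isLeft_of_injective_of_isRight hc hj (Fin.succAbove_ne j i)
      have hρ_inj : Injective ρ := .of_comp (hρ ▸ hr.comp Fin.succAbove_right_injective)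
      have hτ_inj : Injective τ := .of_comp (hτ ▸ hc.comp Fin.succAbove_right_injective)
      refine Ideal.mul_mem_left _ _ ?_
      rw [submatrix_submatrix, hρ, hτ, hinl]
      simpa using det_submatrix_mem_minorsIdeal A hρ_inj hτ_inj
    · obtain ⟨b, hb⟩ := Sum.isLeft_iff.1 (Sum.not_isRight.1 hj)
      obtain ⟨g, hg⟩ := Sum.isRight_iff.1 hi₀
      simp [hb, hg]
  · obtain ⟨ρ, rfl⟩ := Sum.exists_eq_inl_comp fun i => Sum.not_isRight.1 (not_exists.1 hrow i)
    by_cases hcol : ∃ j₀, (c j₀).isRight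
    · obtain ⟨j₀, hj₀⟩ := hcol
      obtain ⟨g, hg⟩ := Sum.isRight_iff.1 hj₀
      rw [det_eq_zero_of_column_eq_zero j₀ fun i => by simp [hg]]
      exact zero_mem _
    · obtain ⟨τ, rfl⟩ := Sum.exists_eq_inl_comp fun j => Sum.not_isRight.1 (not_exists.1 hcol j)
      rw [hinl]
      exact minorsIdeal_succ_le A k
        (by simpa using det_submatrix_mem_minorsIdeal A hr.of_comp hc.of_comp)

theorem minorsIdeal_fromBlocks_zero_one_le {γ : Type u} [Fintype γ] [DecidableEq γ]
    (A : Matrix α β R) (k : ℕ) :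
    (fromBlocks A 0 0 (1 : Matrix γ γ R)).minorsIdeal (k + Fintype.card γ) ≤ A.minorsIdeal k := by
  revert k
  refine Fintype.induction_empty_option
    (P := fun γ _ => ∀ [DecidableEq γ] (k : ℕ),
      (fromBlocks A 0 0 (1 : Matrix γ γ R)).minorsIdeal (k + Fintype.card γ) ≤ A.minorsIdeal k)
    ?_ ?_ ?_ γ
  · intro γ γ' _ e h _ k
    let := Fintype.ofEquiv γ' e.symm
    classical
    have hblock : fromBlocks A 0 0 (1 : Matrix γ' γ' R) =
        (fromBlocks A 0 0 (1 : Matrix γ γ R)).submatrix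
          (Equiv.sumCongr (Equiv.refl α) e.symm) (Equiv.sumCongr (Equiv.refl β) e.symm) := by
      ext (i | i) (j | j) <;> simp [one_apply]
    rw [hblock, minorsIdeal_submatrix_equiv, ← Fintype.card_congr e]
    convert h k
  · intro _ k
    have hblock : fromBlocks A 0 0 (1 : Matrix PEmpty PEmpty R) =
        A.submatrix (Equiv.sumEmpty α PEmpty) (Equiv.sumEmpty β PEmpty) := by
      ext (i | i) (j | j) <;> first | rfl | exact i.elim | exact j.elim
    rw [hblock, minorsIdeal_submatrix_equiv, Fintype.card_eq_zero, add_zero]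
  · intro γ _ ih
    classical
    intro inst k
    obtain rfl : inst = Option.instDecidableEq := Subsingleton.elim _ _
    set eα := (Equiv.sumCongr (Equiv.refl α) (Equiv.optionEquivSumPUnit.{u} γ)).trans
      (Equiv.sumAssoc _ _ _).symm
    set eβ := (Equiv.sumCongr (Equiv.refl β) (Equiv.optionEquivSumPUnit.{u} γ)).trans
      (Equiv.sumAssoc _ _ _).symm
    have hblock : fromBlocks A 0 0 (1 : Matrix (Option γ) (Option γ) R) =
        (fromBlocks (fromBlocks A 0 0 (1 : Matrix γ γ R)) 0 0
          (1 : Matrix PUnit.{u + 1} PUnit R)).submatrix eα eβ := by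
      ext (i | _ | i) (j | _ | j) <;> simp [eα, eβ, one_apply]
    rw [hblock, minorsIdeal_submatrix_equiv, Fintype.card_option, ← add_assoc]
    exact (minorsIdeal_fromBlocks_zero_one_le_of_unique _ _).trans (ih k)

theorem minorsIdeal_fromBlocks_zero_one {γ : Type u} [Fintype γ] [DecidableEq γ]
    (A : Matrix α β R) (k : ℕ) :
    (fromBlocks A 0 0 (1 : Matrix γ γ R)).minorsIdeal (k + Fintype.card γ) = A.minorsIdeal k :=
  le_antisymm (minorsIdeal_fromBlocks_zero_one_le A k) (minorsIdeal_le_fromBlocks_zero_one A k)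

theorem minorsIdeal_fromBlocks_one {γ : Type u} [Fintype α] [DecidableEq α] [Fintype γ]
    [DecidableEq γ] (A : Matrix α β R) (Ψ : Matrix α γ R) (k : ℕ) :
    (fromBlocks A Ψ 0 (1 : Matrix γ γ R)).minorsIdeal (k + Fintype.card γ) = A.minorsIdeal k := by
  have hfactor : fromBlocks A Ψ 0 (1 : Matrix γ γ R) =
      fromBlocks (1 : Matrix α α R) Ψ 0 (1 : Matrix γ γ R) *
        fromBlocks A 0 0 (1 : Matrix γ γ R) := by
    rw [fromBlocks_multiply]
    simp
  have hunit : IsUnit (fromBlocks (1 : Matrix α α R) Ψ 0 (1 : Matrix γ γ R)) := by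
    simp [isUnit_iff_isUnit_det]
  rw [hfactor, minorsIdeal_mul_of_isUnit hunit, minorsIdeal_fromBlocks_zero_one]

theorem minorsIdeal_fromRows_zero [Fintype α] [DecidableEq α] (A : Matrix α β R) (k : ℕ) :
    (fromRows A (0 : Matrix γ β R)).minorsIdeal k = A.minorsIdeal k := by
  have hsub : A = (fromRows A (0 : Matrix γ β R)).submatrix Sum.inl id := rfl
  have hmul : fromRows A (0 : Matrix γ β R) = fromRows 1 (0 : Matrix γ α R) * A := by
    rw [fromRows_mul, Matrix.one_mul, Matrix.zero_mul]
  refine le_antisymm (hmul ▸ minorsIdeal_mul_left_le _ A k) ?_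
  conv_lhs => rw [hsub]
  exact minorsIdeal_submatrix_le _ Sum.inl_injective injective_id k

end Matrix

end Minors

section Presentation

variable {R : Type*} [CommRing R] {M N : Type*} [AddCommGroup M] [Module R M] [AddCommGroup N]
  [Module R N] {α β γ : Type*}

def LinearMap.sumElim (f : (α → R) →ₗ[R] M) (g : (γ → R) →ₗ[R] M) : (α ⊕ γ → R) →ₗ[R] M :=
  f ∘ₗ LinearMap.funLeft R R Sum.inl + g ∘ₗ LinearMap.funLeft R R Sum.inr

@[simp]
theorem LinearMap.sumElim_apply (f : (α → R) →ₗ[R] M) (g : (γ → R) →ₗ[R] M) (x : α ⊕ γ → R) :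
    LinearMap.sumElim f g x = f (x ∘ Sum.inl) + g (x ∘ Sum.inr) :=
  rfl

structure Matrix.IsPresentation [Fintype β] (A : Matrix α β R) (π : (α → R) →ₗ[R] M) : Prop where
  surjective : Surjective π
  ker_eq : LinearMap.ker π = LinearMap.range A.mulVecLin

namespace Matrix.IsPresentation

theorem exists_ker_sumElim_eq [Fintype β] [Fintype γ] [DecidableEq γ] {A : Matrix α β R}
    {π₁ : (α → R) →ₗ[R] M} (h : A.IsPresentation π₁) (π₂ : (γ → R) →ₗ[R] M) :
    ∃ Ψ : Matrix α γ R, LinearMap.ker (LinearMap.sumElim π₁ π₂) =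
      LinearMap.range (fromBlocks A Ψ 0 (1 : Matrix γ γ R)).mulVecLin := by
  -- `Ψ` writes each `-π₂ eⱼ` in the generators `π₁`, so `(x, y)` is a relation iff `x - Ψ y` is
  -- a relation of `A`.
  obtain ⟨φ, hφ⟩ := Module.projective_lifting_property π₁ (-π₂) h.surjective
  refine ⟨LinearMap.toMatrix' φ, ?_⟩
  have hφ_apply (y : γ → R) : π₁ (φ y) = -π₂ y := LinearMap.congr_fun hφ y
  have hA (w : β → R) : π₁ (A *ᵥ w) = 0 := by
    rw [← LinearMap.mem_ker, h.ker_eq]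
    exact ⟨w, rfl⟩
  ext x
  simp only [LinearMap.mem_ker, LinearMap.sumElim_apply, LinearMap.mem_range, mulVecLin_apply,
    fromBlocks_mulVec, LinearMap.toMatrix'_mulVec]
  constructor
  · intro hx
    have hker : x ∘ Sum.inl - φ (x ∘ Sum.inr) ∈ LinearMap.ker π₁ := by
      rw [LinearMap.mem_ker, map_sub, hφ_apply, sub_neg_eq_add, hx]
    rw [h.ker_eq] at hker
    obtain ⟨w, hw⟩ := hker
    refine ⟨Sum.elim w (x ∘ Sum.inr), ?_⟩
    rw [mulVecLin_apply] at hw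
    ext (i | i) <;> simp [hw]
  · rintro ⟨y, rfl⟩
    simp [hφ_apply, hA]

theorem minorsIdeal_eq {α₁ β₁ α₂ β₂ : Type*} [Fintype α₁] [DecidableEq α₁] [Fintype β₁]
    [DecidableEq β₁] [Fintype α₂] [DecidableEq α₂] [Fintype β₂] [DecidableEq β₂]
    {A₁ : Matrix α₁ β₁ R} {A₂ : Matrix α₂ β₂ R} {π₁ : (α₁ → R) →ₗ[R] M}
    {π₂ : (α₂ → R) →ₗ[R] M} (h₁ : A₁.IsPresentation π₁) (h₂ : A₂.IsPresentation π₂)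
    {k₁ k₂ : ℕ} (hk : k₁ + Fintype.card α₂ = k₂ + Fintype.card α₁) :
    A₁.minorsIdeal k₁ = A₂.minorsIdeal k₂ := by
  obtain ⟨Ψ, hΨ⟩ := h₁.exists_ker_sumElim_eq π₂
  obtain ⟨Φ, hΦ⟩ := h₂.exists_ker_sumElim_eq π₁
  set C₁ := fromBlocks A₁ Ψ 0 (1 : Matrix α₂ α₂ R)
  set C₂ := fromBlocks A₂ Φ 0 (1 : Matrix α₁ α₁ R)
  set e := Equiv.sumComm α₁ α₂
  set L := LinearEquiv.funCongrLeft R R e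
  have hswap : LinearMap.sumElim π₂ π₁ = LinearMap.sumElim π₁ π₂ ∘ₗ L.toLinearMap :=
    LinearMap.ext fun x => by simp [L, e, add_comm, Function.comp_def]
  have hsub : (C₂.submatrix e (Equiv.refl _)).mulVecLin = L.toLinearMap ∘ₗ C₂.mulVecLin :=
    LinearMap.ext fun _ => rfl
  have hrange : LinearMap.range C₁.mulVecLin =
      LinearMap.range (C₂.submatrix e (Equiv.refl _)).mulVecLin := by
    rw [hsub, LinearMap.range_comp, ← hΦ, hswap, LinearMap.ker_comp, ← hΨ,
      Submodule.map_comap_eq_of_surjective L.surjective]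
  calc A₁.minorsIdeal k₁
      = C₁.minorsIdeal (k₁ + Fintype.card α₂) := (minorsIdeal_fromBlocks_one A₁ Ψ k₁).symm
    _ = C₂.minorsIdeal (k₂ + Fintype.card α₁) := by
        rw [minorsIdeal_eq_of_range_eq hrange, minorsIdeal_submatrix_equiv, hk]
    _ = A₂.minorsIdeal k₂ := minorsIdeal_fromBlocks_one A₂ Φ k₂

theorem fromRows_zero [Fintype β] {B : Matrix α β R} {πN : (α → R) →ₗ[R] N}
    (hB : B.IsPresentation πN) {f : N →ₗ[R] M} {g : M →ₗ[R] (γ → R)} {s : (γ → R) →ₗ[R] M}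
    (hf : Injective f) (hfg : LinearMap.range f = LinearMap.ker g) (hgs : g ∘ₗ s = LinearMap.id) :
    (fromRows B (0 : Matrix γ β R)).IsPresentation (LinearMap.sumElim (f ∘ₗ πN) s) := by
  have hgf (y : N) : g (f y) = 0 := by
    rw [← LinearMap.mem_ker, ← hfg]
    exact LinearMap.mem_range_self f y
  have hgs_apply (v : γ → R) : g (s v) = v := LinearMap.congr_fun hgs v
  have hBw (w : β → R) : πN (B *ᵥ w) = 0 := by
    rw [← LinearMap.mem_ker, hB.ker_eq]
    exact ⟨w, rfl⟩
  constructor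
  · intro m
    obtain ⟨y, hy⟩ : m - s (g m) ∈ LinearMap.range f := by
      rw [hfg, LinearMap.mem_ker, map_sub, hgs_apply, sub_self]
    obtain ⟨u, rfl⟩ := hB.surjective y
    exact ⟨Sum.elim u (g m), by simp [hy]⟩
  · ext x
    simp only [LinearMap.mem_ker, LinearMap.sumElim_apply, LinearMap.comp_apply,
      LinearMap.mem_range, mulVecLin_apply, fromRows_mulVec, zero_mulVec]
    constructor
    · intro hx
      have hinr : x ∘ Sum.inr = 0 := by simpa [hgf, hgs_apply] using congrArg g hx
      rw [hinr, map_zero, add_zero, ← map_zero f] at hx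
      have hinl : x ∘ Sum.inl ∈ LinearMap.ker πN := hf hx
      rw [hB.ker_eq] at hinl
      obtain ⟨w, hw⟩ := hinl
      refine ⟨w, ?_⟩
      rw [mulVecLin_apply] at hw
      ext (i | i)
      · exact congrFun hw i
      · exact (congrFun hinr i).symm
    · rintro ⟨w, rfl⟩
      simp [hBw]

end Matrix.IsPresentation

end Presentation

/-- Let `R` be a commutative ring and `0 → N → M → R^r → 0` a short exact sequence of
(finitely presented) `R`-modules.  Then the `r`-th Fitting ideal of `M` equals the
`0`-th Fitting ideal of `N`.  (Fitting ideals are computed from arbitrary finite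
presentations of `M` and `N`.) -/
theorem stmt5 (R : Type) [CommRing R] (r : ℕ)
    (M N : Type) [AddCommGroup M] [Module R M] [AddCommGroup N] [Module R N]
    -- a finite presentation of M by the matrix A
    (n mA : ℕ) (A : Matrix (Fin n) (Fin mA) R) (πM : (Fin n → R) →ₗ[R] M)
    (hπM : Function.Surjective πM) (hA : LinearMap.ker πM = LinearMap.range A.mulVecLin)
    -- a finite presentation of N by the matrix B
    (n' mB : ℕ) (B : Matrix (Fin n') (Fin mB) R) (πN : (Fin n' → R) →ₗ[R] N)
    (hπN : Function.Surjective πN) (hB : LinearMap.ker πN = LinearMap.range B.mulVecLin)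
    -- the short exact sequence 0 → N → M → R^r → 0
    (f : N →ₗ[R] M) (g : M →ₗ[R] (Fin r → R))
    (hf : Function.Injective f) (hg : Function.Surjective g)
    (hfg : LinearMap.range f = LinearMap.ker g) :
    fittingIdeal A r = fittingIdeal B 0 := by
  rcases subsingleton_or_nontrivial R with _ | _
  · exact Subsingleton.elim _ _
  -- needed because `fittingIdeal A r` uses the truncated difference `n - r`
  have hrn : r ≤ n := le_of_fin_surjective R (g ∘ₗ πM) (hg.comp hπM)
  obtain ⟨s, hs⟩ := Module.projective_lifting_property g LinearMap.id hg
  have hM := Matrix.IsPresentation.fromRows_zero ⟨hπN, hB⟩ hf hfg hs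
  calc fittingIdeal A r = A.minorsIdeal (n - r) := rfl
    _ = (Matrix.fromRows B (0 : Matrix (Fin r) (Fin mB) R)).minorsIdeal n' :=
      Matrix.IsPresentation.minorsIdeal_eq ⟨hπM, hA⟩ hM (by simp only [Fintype.card_fin, Fintype.card_sum]; omega)
    _ = fittingIdeal B 0 := Matrix.minorsIdeal_fromRows_zero B n'
end

section
/- Let K be a number field of degree r and j an integer. Under the comparison isomorphism ℝ ⊗ K ≅ (ℝ ⊗ H_K(j)^+) ⊕ (ℝ ⊗ H_K(j-1)^+) composed with the map (x,y) ↦ 2x + (1/2)(2πi)y into ℝ ⊗ H_K(j), the image α_j(x_1 ∧ ... ∧ x_r) of a ℤ-basis of O_K in the top exterior power, identified with ℝ via the standard basis of H_K(j), equals ± 2^{r_ℝ}(2π)^{r_ℂ} √|D_K| / (2π)^{jr} if j is even, and ± 2^{-r_ℝ}(2π)^{r_ℝ+r_ℂ} √|D_K| / (2π)^{jr} if j is odd. -/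
/-!
Put `A = (σ_i(x_k))`, so that `(det A)² = D_K`. With `c = (1 + (π/2)i)(2πi)^{-j}` the matrix of
the statement is `2 Re(c A)`. Complex conjugation permutes the rows of `A` by the involution `τ`
of the embeddings, hence `2 Re(c A) = (c + c̄ P_τ) A`. The permutation matrix `P_τ` is a Hermitian
involution whose trace is the number `r_ℝ` of real embeddings, so its eigenvalues are `1` with
multiplicity `r_ℝ + r_ℂ` and `-1` with multiplicity `r_ℂ`, and
`det (c + c̄ P_τ) = (2 Re c)^{r_ℝ + r_ℂ} (2i Im c)^{r_ℂ}`. Finally `(2πi)^{-j}` is real for even `j`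
and purely imaginary for odd `j`, which determines `|Re c|` and `|Im c|`.
-/

namespace Matrix.IsHermitian

open Finset

variable {𝕜 n : Type*} [RCLike 𝕜] [Fintype n] [DecidableEq n] {A : Matrix n n 𝕜}

lemma det_smul_one_add_smul (hA : A.IsHermitian) (a b : 𝕜) :
    det (a • 1 + b • A) = ∏ i, (a + b * hA.eigenvalues i) := by
  have hdiag : diagonal (fun i => a + b * hA.eigenvalues i) =
      a • 1 + b • diagonal (RCLike.ofReal ∘ hA.eigenvalues) := by
    ext i k; by_cases h : i = k <;> simp [h]
  have hconj : a • 1 + b • A =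
      Unitary.conjStarAlgAut 𝕜 _ hA.eigenvectorUnitary (diagonal fun i => a + b * hA.eigenvalues i) := by
    rw [hdiag, map_add, map_smul, map_smul, map_one, ← hA.spectral_theorem]
  rw [hconj, Unitary.conjStarAlgAut_apply, det_mul_comm, ← Matrix.mul_assoc,
    Unitary.coe_star_mul_self, Matrix.one_mul, det_diagonal]

lemma eigenvalues_eq_one_or_neg_one (hA : A.IsHermitian) (hAA : A * A = 1) (i : n) :
    hA.eigenvalues i = 1 ∨ hA.eigenvalues i = -1 := by
  set v := ⇑(hA.eigenvectorBasis i)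
  have hv : v ≠ 0 := (WithLp.ofLp_eq_zero 2).ne.2 <| hA.eigenvectorBasis.orthonormal.ne_zero i
  have hsq : (hA.eigenvalues i ^ 2 : ℝ) • v = (1 : ℝ) • v := by
    rw [one_smul]
    conv_rhs => rw [← one_mulVec v, ← hAA, ← mulVec_mulVec, hA.mulVec_eigenvectorBasis,
      mulVec_smul, hA.mulVec_eigenvectorBasis, smul_smul, ← sq]
  exact sq_eq_one_iff.mp (smul_left_injective ℝ hv hsq)

lemma det_smul_one_add_smul_of_mul_self_eq_one (hA : A.IsHermitian) (hAA : A * A = 1)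
    (a b : 𝕜) : ∃ p q : ℕ, p + q = Fintype.card n ∧ (p - q : 𝕜) = A.trace ∧
      det (a • 1 + b • A) = (a + b) ^ p * (a - b) ^ q := by
  have hpm := hA.eigenvalues_eq_one_or_neg_one hAA
  have hev : ∀ i, (hA.eigenvalues i : 𝕜) = if hA.eigenvalues i = 1 then 1 else -1 := fun i => by
    rcases hpm i with h | h <;> norm_num [h]
  refine ⟨#{i | hA.eigenvalues i = 1}, #{i | ¬hA.eigenvalues i = 1},
    card_filter_add_card_filter_not _, ?_, ?_⟩
  · simp_rw [hA.trace_eq_sum_eigenvalues, hev, sum_ite, sum_const, nsmul_eq_mul]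
    ring
  · simp_rw [hA.det_smul_one_add_smul, hev, mul_ite, mul_one, mul_neg_one, apply_ite (a + ·),
      ← sub_eq_add_neg]
    rw [prod_ite, prod_const, prod_const]

end Matrix.IsHermitian

namespace Equiv.Perm

open Matrix

variable {𝕜 n : Type*} [RCLike 𝕜] [Fintype n] [DecidableEq n] {τ : Equiv.Perm n}

omit [Fintype n] in
lemma isHermitian_permMatrix_of_involutive (hτ : Function.Involutive τ) :
    (τ.permMatrix 𝕜).IsHermitian := by
  rw [IsHermitian, conjTranspose_permMatrix, inv_eq_of_mul_eq_one_right (Equiv.ext hτ)]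

lemma permMatrix_mul_self_of_involutive (hτ : Function.Involutive τ) :
    τ.permMatrix 𝕜 * τ.permMatrix 𝕜 = 1 := by
  have hττ : τ * τ = 1 := Equiv.ext hτ
  rw [← permMatrix_mul, hττ, permMatrix_one]

lemma det_smul_one_add_smul_permMatrix_of_involutive (hτ : Function.Involutive τ) (a b : 𝕜) :
    ∃ p q : ℕ, p + q = Fintype.card n ∧ p = q + (Function.fixedPoints τ).ncard ∧
      det (a • 1 + b • τ.permMatrix 𝕜) = (a + b) ^ p * (a - b) ^ q := by
  obtain ⟨p, q, hpq, htr, hdet⟩ :=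
    (isHermitian_permMatrix_of_involutive hτ).det_smul_one_add_smul_of_mul_self_eq_one
      (permMatrix_mul_self_of_involutive hτ) a b
  refine ⟨p, q, hpq, ?_, hdet⟩
  rw [trace_permutation, sub_eq_iff_eq_add'] at htr
  exact_mod_cast htr

lemma permMatrix_mul_eq_map_conj {κ : Type*} {A : Matrix n κ ℂ} (hA : ∀ i k, A (τ i) k = starRingEnd ℂ (A i k)) :
    τ.permMatrix ℂ * A = A.map (starRingEnd ℂ) := by
  ext i k
  rw [PEquiv.toMatrix_toPEquiv_mul, submatrix_apply, hA, map_apply]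
  rfl

end Equiv.Perm

namespace NumberField

open ComplexEmbedding InfinitePlace Matrix

variable {K : Type*} [Field K] {ι : Type*}

def ComplexEmbedding.conjPerm (σ : ι ≃ (K →+* ℂ)) : Equiv.Perm ι :=
  σ.trans (((involutive_conjugate K).toPerm _).trans σ.symm)

@[simp]
lemma ComplexEmbedding.apply_conjPerm (σ : ι ≃ (K →+* ℂ)) (i : ι) :
    σ (conjPerm σ i) = conjugate (σ i) := by
  simp [conjPerm]

lemma ComplexEmbedding.conjPerm_involutive (σ : ι ≃ (K →+* ℂ)) :
    Function.Involutive (conjPerm σ) := fun i => σ.injective (by simp)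

lemma ComplexEmbedding.ncard_fixedPoints_conjPerm [NumberField K] (σ : ι ≃ (K →+* ℂ)) :
    (Function.fixedPoints (conjPerm σ)).ncard = nrRealPlaces K := by
  classical
  have e : Function.fixedPoints (conjPerm σ) ≃ {φ : K →+* ℂ // IsReal φ} :=
    σ.subtypeEquiv fun i => by
      rw [isReal_iff, ← apply_conjPerm, σ.injective.eq_iff]; rfl
  rw [← Nat.card_coe_set_eq, Nat.card_congr e, Nat.card_eq_fintype_card, card_real_embeddings]

variable [NumberField K] [Fintype ι] [DecidableEq ι]

lemma det_embeddingsMatrix_sq (σ : ι ≃ (K →+* ℂ)) (b : Module.Basis ι ℤ (𝓞 K)) :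
    (Matrix.of fun i k => σ i (algebraMap (𝓞 K) K (b k))).det ^ 2 = discr K := by
  have hb : (fun k => algebraMap (𝓞 K) K (b k)) =
      b.localizationLocalization ℚ (nonZeroDivisors ℤ) K := by
    funext k
    rw [Module.Basis.localizationLocalization_apply]
  have hM : (Matrix.of fun i k => σ i (algebraMap (𝓞 K) K (b k)))ᵀ =
      Algebra.embeddingsMatrixReindex ℚ ℂ (fun k => algebraMap (𝓞 K) K (b k))
        (σ.trans (RingHom.equivRatAlgHom K ℂ)) := rfl
  rw [← det_transpose, hM, ← Algebra.discr_eq_det_embeddingsMatrixReindex_pow_two, hb,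
    Algebra.discr_localizationLocalization, discr_eq_discr]
  simp

lemma norm_det_embeddingsMatrix (σ : ι ≃ (K →+* ℂ)) (b : Module.Basis ι ℤ (𝓞 K)) :
    ‖(Matrix.of fun i k => σ i (algebraMap (𝓞 K) K (b k))).det‖ = √|(discr K : ℝ)| := by
  rw [← Real.sqrt_sq (norm_nonneg _), ← norm_pow, det_embeddingsMatrix_sq]
  simp

theorem abs_det_two_mul_re_embeddingsMatrix (σ : ι ≃ (K →+* ℂ)) (b : Module.Basis ι ℤ (𝓞 K))
    (c : ℂ) :
    |(Matrix.of fun i k => 2 * (c * σ i (algebraMap (𝓞 K) K (b k))).re).det| =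
      |2 * c.re| ^ (nrRealPlaces K + nrComplexPlaces K) * |2 * c.im| ^ nrComplexPlaces K *
        √|(discr K : ℝ)| := by
  set A : Matrix ι ι ℂ := Matrix.of fun i k => σ i (algebraMap (𝓞 K) K (b k))
  set τ := conjPerm σ
  change |(Matrix.of fun i k => 2 * (c * A i k).re).det| = _
  have hconj : τ.permMatrix ℂ * A = A.map (starRingEnd ℂ) :=
    Equiv.Perm.permMatrix_mul_eq_map_conj fun i k => by simp [A, τ]
  have hfactor : (Matrix.of fun i k => 2 * (c * A i k).re).map ((↑) : ℝ → ℂ) =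
      (c • 1 + starRingEnd ℂ c • τ.permMatrix ℂ) * A := by
    rw [Matrix.add_mul, smul_mul, smul_mul, Matrix.one_mul, hconj]
    ext i k
    simp only [Matrix.map_apply, of_apply, Matrix.add_apply, Matrix.smul_apply, smul_eq_mul]
    rw [← map_mul, Complex.add_conj]
  obtain ⟨p, q, hpq, hfix, hdet⟩ :=
    Equiv.Perm.det_smul_one_add_smul_permMatrix_of_involutive (conjPerm_involutive σ) c
      (starRingEnd ℂ c)
  have hcard : p + q = nrRealPlaces K + 2 * nrComplexPlaces K := by
    rw [hpq, card_add_two_mul_card_eq_rank, Fintype.card_congr σ, Embeddings.card]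
  rw [ncard_fixedPoints_conjPerm] at hfix
  obtain ⟨rfl, rfl⟩ : p = nrRealPlaces K + nrComplexPlaces K ∧ q = nrComplexPlaces K := by omega
  have hdetM : ((Matrix.of fun i k => 2 * (c * A i k).re).det : ℂ) =
      (c + starRingEnd ℂ c) ^ (nrRealPlaces K + nrComplexPlaces K) *
        (c - starRingEnd ℂ c) ^ nrComplexPlaces K * A.det := by
    rw [← hdet, ← det_mul, ← hfactor]
    exact RingHom.map_det Complex.ofRealHom _
  rw [← Real.norm_eq_abs, ← Complex.norm_real, hdetM, norm_mul, norm_mul, norm_pow, norm_pow,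
    Complex.add_conj, Complex.sub_conj, norm_det_embeddingsMatrix]
  simp

end NumberField

open Complex Real NumberField InfinitePlace

namespace Complex

lemma norm_two_pi_I_zpow (m : ℤ) : ‖(2 * π * I : ℂ) ^ m‖ = (2 * π) ^ m := by
  rw [norm_zpow]
  simp [abs_of_pos pi_pos]

lemma conj_two_pi_I_zpow (m : ℤ) :
    starRingEnd ℂ ((2 * π * I : ℂ) ^ m) = (-(2 * π * I)) ^ m := by
  simp [map_zpow₀, map_ofNat]

lemma two_pi_I_zpow_im_of_even {m : ℤ} (hm : Even m) : ((2 * π * I : ℂ) ^ m).im = 0 := by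
  rw [← conj_eq_iff_im, conj_two_pi_I_zpow, hm.neg_zpow]

lemma two_pi_I_zpow_re_of_odd {m : ℤ} (hm : Odd m) : ((2 * π * I : ℂ) ^ m).re = 0 := by
  have h := congrArg re (conj_two_pi_I_zpow m)
  rw [hm.neg_zpow, conj_re, neg_re] at h
  linarith

end Complex

noncomputable def comparisonCoeff (j : ℤ) : ℂ := (1 + π / 2 * I) * (2 * π * I) ^ (-j)

lemma two_mul_re_add_half_re_eq (z : ℂ) (j : ℤ) :
    2 * (z * (2 * π * I) ^ (-j)).re + 1 / 2 * (z * (2 * π * I) ^ (1 - j)).re =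
      2 * (comparisonCoeff j * z).re := by
  have h2πI : (2 * π * I : ℂ) ≠ 0 := by simp [pi_ne_zero]
  rw [sub_eq_add_neg, zpow_add₀ h2πI, zpow_one, comparisonCoeff]
  generalize (2 * π * I : ℂ) ^ (-j) = w
  simp [Complex.mul_re, Complex.mul_im]
  ring

lemma comparisonCoeff_re (j : ℤ) :
    (comparisonCoeff j).re = ((2 * π * I) ^ (-j)).re - π / 2 * ((2 * π * I) ^ (-j)).im := by
  simp [comparisonCoeff, Complex.mul_re, -zpow_neg]

lemma comparisonCoeff_im (j : ℤ) :
    (comparisonCoeff j).im = ((2 * π * I) ^ (-j)).im + π / 2 * ((2 * π * I) ^ (-j)).re := by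
  simp [comparisonCoeff, Complex.mul_im, -zpow_neg]

lemma abs_two_mul_re_comparisonCoeff (j : ℤ) :
    |2 * (comparisonCoeff j).re| = (if Even j then 2 else π) * (2 * π) ^ (-j) := by
  rw [← norm_two_pi_I_zpow, comparisonCoeff_re]
  rcases Int.even_or_odd j with hj | hj
  · have hw := two_pi_I_zpow_im_of_even hj.neg
    rw [if_pos hj, ← abs_re_eq_norm.2 hw]
    generalize (2 * π * I : ℂ) ^ (-j) = w at hw ⊢
    simp [hw, abs_mul]
  · have hw := two_pi_I_zpow_re_of_odd hj.neg
    rw [if_neg (Int.not_even_iff_odd.2 hj), ← abs_im_eq_norm.2 hw]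
    generalize (2 * π * I : ℂ) ^ (-j) = w at hw ⊢
    simp [hw, abs_mul]
    rw [abs_of_pos (by positivity)]
    ring

lemma abs_two_mul_im_comparisonCoeff (j : ℤ) :
    |2 * (comparisonCoeff j).im| = (if Even j then π else 2) * (2 * π) ^ (-j) := by
  rw [← norm_two_pi_I_zpow, comparisonCoeff_im]
  rcases Int.even_or_odd j with hj | hj
  · have hw := two_pi_I_zpow_im_of_even hj.neg
    rw [if_pos hj, ← abs_re_eq_norm.2 hw]
    generalize (2 * π * I : ℂ) ^ (-j) = w at hw ⊢
    simp [hw, abs_mul]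
    rw [abs_of_pos (by positivity)]
    ring
  · have hw := two_pi_I_zpow_re_of_odd hj.neg
    rw [if_neg (Int.not_even_iff_odd.2 hj), ← abs_im_eq_norm.2 hw]
    generalize (2 * π * I : ℂ) ^ (-j) = w at hw ⊢
    simp [hw, abs_mul]

lemma abs_two_mul_re_pow_mul_abs_two_mul_im_pow (j : ℤ) (rR rC : ℕ) :
    |2 * (comparisonCoeff j).re| ^ (rR + rC) * |2 * (comparisonCoeff j).im| ^ rC =
      (if Even j then (2 : ℝ) ^ rR * (2 * π) ^ rC else (2⁻¹ : ℝ) ^ rR * (2 * π) ^ (rR + rC)) /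
        (2 * π) ^ (j * ((rR + 2 * rC : ℕ) : ℤ)) := by
  have hG : ((2 * π) ^ (-j)) ^ (rR + 2 * rC) = ((2 * π) ^ (j * ((rR + 2 * rC : ℕ) : ℤ)))⁻¹ := by
    rw [← zpow_natCast, ← _root_.zpow_mul, neg_mul, _root_.zpow_neg]
  rw [abs_two_mul_re_comparisonCoeff, abs_two_mul_im_comparisonCoeff, div_eq_mul_inv, ← hG]
  split_ifs
  · ring
  · rw [inv_pow]
    field_simp
    ring

/-- Let `K` be a number field of degree `r` and `j` an integer.  The comparison
isomorphism `ℝ ⊗ K ≅ (ℝ ⊗ H_K(j)^+) ⊕ (ℝ ⊗ H_K(j-1)^+)`, composed with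
`(x, y) ↦ 2x + (1/2)(2πi)y` into `ℝ ⊗ H_K(j)`, sends `x ∈ K` to the vector with
`σ`-coordinate `2·Re(σ(x)(2πi)^{-j}) + (1/2)·Re(σ(x)(2πi)^{1-j})` with respect to
the standard basis of `H_K(j)`.  For a `ℤ`-basis `x_1, …, x_r` of `O_K`, the image
`α_j(x_1 ∧ ⋯ ∧ x_r)`, identified with a real number, equals
`± 2^{r_ℝ}(2π)^{r_ℂ} √|D_K| / (2π)^{jr}` if `j` is even and
`± 2^{-r_ℝ}(2π)^{r_ℝ + r_ℂ} √|D_K| / (2π)^{jr}` if `j` is odd. -/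
theorem stmt12 (K : Type) [Field K] [NumberField K] (r rR rC : ℕ)
    (hr : r = Module.finrank ℚ K)
    (hrR : rR = Nat.card {v : NumberField.InfinitePlace K // v.IsReal})
    (hrC : rC = Nat.card {v : NumberField.InfinitePlace K // v.IsComplex})
    (j : ℤ) (σ : Fin r ≃ (K →+* ℂ)) (b : Module.Basis (Fin r) ℤ (NumberField.RingOfIntegers K)) :
    ∃ ε : ℝ, (ε = 1 ∨ ε = -1) ∧
      Matrix.det (Matrix.of fun i k : Fin r =>
          2 * (((σ i) (algebraMap (NumberField.RingOfIntegers K) K (b k)) *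
              (2 * (Real.pi : ℂ) * Complex.I) ^ (-j)).re)
          + (1 / 2) * (((σ i) (algebraMap (NumberField.RingOfIntegers K) K (b k)) *
              (2 * (Real.pi : ℂ) * Complex.I) ^ (1 - j)).re))
        = ε *
            (if Even j then (2 : ℝ) ^ rR * (2 * Real.pi) ^ rC
              else ((2 : ℝ)⁻¹) ^ rR * (2 * Real.pi) ^ (rR + rC)) *
            Real.sqrt ((|NumberField.discr K| : ℤ) : ℝ) /
            (2 * Real.pi) ^ (j * (r : ℤ)) := by
  have hrR' : nrRealPlaces K = rR := (hrR.trans Fintype.card_eq_nat_card.symm).symm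
  have hrC' : nrComplexPlaces K = rC := (hrC.trans Fintype.card_eq_nat_card.symm).symm
  have hrank : r = rR + 2 * rC := by rw [hr, ← hrR', ← hrC', card_add_two_mul_card_eq_rank]
  have habs := abs_det_two_mul_re_embeddingsMatrix σ b (comparisonCoeff j)
  simp_rw [← two_mul_re_add_half_re_eq, hrR', hrC', abs_two_mul_re_pow_mul_abs_two_mul_im_pow,
    ← hrank, ← Int.cast_abs] at habs
  rcases eq_or_eq_neg_of_abs_eq habs with h | h
  · exact ⟨1, Or.inl rfl, by rw [h]; ring⟩
  · exact ⟨-1, Or.inr rfl, by rw [h]; ring⟩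
end
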